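/- arXiv:0909.0543 — 3 statements merged into one kernel-verified Lean document; each statement's English description precedes it below -/
import Mathlib

section
/- Let N ≥ 1, let λ₁,…,λ_N be distinct complex numbers, let Γ be an N×N complex matrix with zero diagonal, let U = diag(λ₁,…,λ_N), V = [Γ,U] = ΓU − UΓ, and let E_j be the N×N matrix with 1 in entry (j,j) and zeros elsewhere. Fix q ∈ ℂ. Then a vector-valued function φ = (φ₁,…,φ_N), depending on λ and on (λ₁,…,λ_N), satisfies dφ/dλ = −Σ_{j=1}^N (λ−λ_j)^{-1} E_j(V+qI) φ together with dφ/dλ_j = ((λ−λ_j)^{-1} E_j(V+qI) + [Γ,E_j]) φ for all j, if and only if it satisfies the three equations: (i) λ ∂φ_j/∂λ + Σ_k λ_k ∂φ_j/∂λ_k = −q φ_j; (ii) ∂φ_j/∂λ + Σ_k ∂φ_j/∂λ_k = 0; (iii) ∂φ_j/∂λ_k = Γ_{jk} φ_k for all j ≠ k. -/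
/-!
Componentwise, `E_j (V + qI) φ` is supported on the `j`-th coordinate, where it equals
`a_j = Σ_k (λ_k - λ_j) Γ_jk φ_k + q φ_j`, and `[Γ, E_j] φ` has `i`-th entry `Γ_ij φ_j - δ_ij (Γ φ)_j`.
So the system prescribes the off-diagonal derivatives `∂φ_i/∂λ_j = Γ_ij φ_j`, which is (iii), and
for each `j` the pair `(∂φ_j/∂λ, ∂φ_j/∂λ_j)`. Given (iii) and `Γ_jj = 0`, equations (i) and (ii) for
`φ_j` are a 2×2 linear system in that pair with determinant `λ - λ_j ≠ 0`, whose unique solution is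
the prescribed one.
-/

open Matrix

section

variable {n R : Type*} [Fintype n] [CommRing R]

theorem sum_mul_eq_of_off_diagonal {Γ : Matrix n n R} {j : n} (hΓ : Γ j j = 0) {D v : n → R}
    (hoff : ∀ k, j ≠ k → D k = Γ j k * v k) (w : n → R) :
    ∑ k, w k * D k = w j * D j + (Γ *ᵥ (w * v)) j := by
  have hdiag : ∑ k, w k * (D k - Γ j k * v k) = w j * D j := by
    rw [Finset.sum_eq_single j (fun k _ hk => by rw [hoff k hk.symm, sub_self, mul_zero])
      (fun h => absurd (Finset.mem_univ j) h), hΓ, zero_mul, sub_zero]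
  rw [← hdiag, mulVec, dotProduct, ← Finset.sum_add_distrib]
  exact Finset.sum_congr rfl fun k _ => by simp only [Pi.mul_apply]; ring

variable [DecidableEq n]

theorem single_one_mul_mulVec_apply (M : Matrix n n R) (v : n → R) (j i : n) :
    ((single j j (1 : R) * M) *ᵥ v) i = if i = j then (M *ᵥ v) j else 0 := by
  rw [← mulVec_mulVec, single_mulVec, one_mul, Function.update_apply, Pi.zero_apply]

theorem commutator_single_one_mulVec_apply (Γ : Matrix n n R) (v : n → R) (j i : n) :
    ((Γ * single j j (1 : R) - single j j (1 : R) * Γ) *ᵥ v) i =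
      Γ i j * v j - if i = j then (Γ *ᵥ v) j else 0 := by
  rw [sub_mulVec, Pi.sub_apply, single_one_mul_mulVec_apply, ← mulVec_mulVec, single_mulVec,
    one_mul]
  simp [mulVec, dotProduct, Function.update_apply]

theorem neg_sum_smul_single_one_mul_mulVec_apply (c : n → R) (M : Matrix n n R) (v : n → R)
    (i : n) :
    ((-∑ j, c j • (single j j (1 : R) * M)) *ᵥ v) i = -(c i * (M *ᵥ v) i) := by
  simp [neg_mulVec, sum_mulVec, smul_mulVec, single_one_mul_mulVec_apply]

theorem smul_single_one_mul_add_commutator_mulVec_apply (c : R) (M Γ : Matrix n n R)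
    (v : n → R) (j i : n) :
    ((c • (single j j (1 : R) * M) + (Γ * single j j (1 : R) - single j j (1 : R) * Γ)) *ᵥ v) i =
      (if i = j then c * (M *ᵥ v) j - (Γ *ᵥ v) j else 0) + Γ i j * v j := by
  rw [add_mulVec, smul_mulVec, Pi.add_apply, Pi.smul_apply, single_one_mul_mulVec_apply,
    commutator_single_one_mulVec_apply]
  split_ifs <;> simp only [smul_eq_mul, mul_zero] <;> ring

theorem commutator_diagonal_add_smul_one_mulVec_apply (Γ : Matrix n n R) (d v : n → R) (q : R)
    (j : n) :
    ((Γ * diagonal d - diagonal d * Γ + q • 1) *ᵥ v) j =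
      (Γ *ᵥ (d * v)) j - d j * (Γ *ᵥ v) j + q * v j := by
  have hdiag : diagonal d *ᵥ v = d * v := funext (mulVec_diagonal d v)
  simp [add_mulVec, sub_mulVec, ← mulVec_mulVec, smul_mulVec, mulVec_diagonal, hdiag]

end

section

variable {n K : Type*} [Fintype n] [DecidableEq n] [Field K]

theorem mul_add_mul_eq_neg_and_add_eq_zero_iff {z w : K} (h : z ≠ w) (x y a : K) :
    (z * x + w * y = -a ∧ x + y = 0) ↔ (x = -((z - w)⁻¹ * a) ∧ y = (z - w)⁻¹ * a) := by
  have hzw : z - w ≠ 0 := sub_ne_zero.mpr h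
  constructor
  · rintro ⟨h1, h2⟩
    have hx : x = -((z - w)⁻¹ * a) := by
      field_simp
      linear_combination h1 - w * h2
    exact ⟨hx, by linear_combination h2 - hx⟩
  · rintro ⟨rfl, rfl⟩
    constructor
    · field_simp
      ring
    · ring

theorem euler_and_unit_iff_of_off_diagonal {Γ : Matrix n n K} {lam φ Dp : n → K} {z q Dz : K}
    {j : n} (hz : z ≠ lam j) (hΓ : Γ j j = 0) (hoff : ∀ k, j ≠ k → Dp k = Γ j k * φ k) :
    (z * Dz + ∑ k, lam k * Dp k = -q * φ j ∧ Dz + ∑ k, Dp k = 0) ↔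
      (Dz = -((z - lam j)⁻¹ * ((Γ * diagonal lam - diagonal lam * Γ + q • 1) *ᵥ φ) j) ∧
        Dp j = (z - lam j)⁻¹ * ((Γ * diagonal lam - diagonal lam * Γ + q • 1) *ᵥ φ) j -
          (Γ *ᵥ φ) j) := by
  have hsum := sum_mul_eq_of_off_diagonal hΓ hoff 1
  simp only [Pi.one_apply, one_mul] at hsum
  rw [sum_mul_eq_of_off_diagonal hΓ hoff lam, hsum, commutator_diagonal_add_smul_one_mulVec_apply,
    eq_sub_iff_add_eq, ← mul_add_mul_eq_neg_and_add_eq_zero_iff hz]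
  exact and_congr ⟨fun h => by linear_combination h, fun h => by linear_combination h⟩ Iff.rfl

end

theorem fuchsian_system_iff_euler_unit_rauch_general
    (N : ℕ) (lam : Fin N → ℂ)
    (z : ℂ) (hz : ∀ j, z ≠ lam j)
    (Γ : Matrix (Fin N) (Fin N) ℂ) (hΓ : ∀ j, Γ j j = 0) (q : ℂ)
    (φ Dz : Fin N → ℂ) (Dp : Fin N → Fin N → ℂ) :
    ((Dz = (-∑ j, (z - lam j)⁻¹ •
        (Matrix.single j j (1 : ℂ) *
          ((Γ * Matrix.diagonal lam - Matrix.diagonal lam * Γ) +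
            q • (1 : Matrix (Fin N) (Fin N) ℂ)))).mulVec φ) ∧
      (∀ j, (fun i => Dp i j) =
        (((z - lam j)⁻¹ •
            (Matrix.single j j (1 : ℂ) *
              ((Γ * Matrix.diagonal lam - Matrix.diagonal lam * Γ) +
                q • (1 : Matrix (Fin N) (Fin N) ℂ)))) +
          (Γ * Matrix.single j j (1 : ℂ) -
            Matrix.single j j (1 : ℂ) * Γ)).mulVec φ))
    ↔ ((∀ j, z * Dz j + ∑ k, lam k * Dp j k = -q * φ j) ∧
       (∀ j, Dz j + ∑ k, Dp j k = 0) ∧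
       (∀ j k, j ≠ k → Dp j k = Γ j k * φ k)) := by
  simp only [funext_iff, neg_sum_smul_single_one_mul_mulVec_apply,
    smul_single_one_mul_add_commutator_mulVec_apply]
  constructor
  · rintro ⟨hDz, hDp⟩
    have hoff : ∀ j k, j ≠ k → Dp j k = Γ j k * φ k := fun j k hjk => by
      simpa [hjk] using hDp k j
    have hdiag := fun j => (hDp j j).trans (by rw [if_pos rfl, hΓ, zero_mul, add_zero])
    have heu := fun j => (euler_and_unit_iff_of_off_diagonal (hz j) (hΓ j) (hoff j)).mpr
      ⟨hDz j, hdiag j⟩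
    exact ⟨fun j => (heu j).1, fun j => (heu j).2, hoff⟩
  · rintro ⟨heuler, hunit, hoff⟩
    have heu := fun j => (euler_and_unit_iff_of_off_diagonal (hz j) (hΓ j) (hoff j)).mp
      ⟨heuler j, hunit j⟩
    refine ⟨fun j => (heu j).1, fun j i => ?_⟩
    rcases eq_or_ne i j with rfl | hij
    · rw [(heu i).2, if_pos rfl, hΓ, zero_mul, add_zero]
    · rw [if_neg hij, zero_add, hoff i j hij]

/-- The Fuchsian system together with the isomonodromic deformation equations for a
vector `φ` is equivalent to the three equations (Euler, unit, and Rauch-type). -/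
theorem fuchsian_system_iff_euler_unit_rauch
    (N : ℕ) (hN : 1 ≤ N) (lam : Fin N → ℂ) (hinj : Function.Injective lam)
    (z : ℂ) (hz : ∀ j, z ≠ lam j)
    (Γ : Matrix (Fin N) (Fin N) ℂ) (hΓ : ∀ j, Γ j j = 0) (q : ℂ)
    (φ Dz : Fin N → ℂ) (Dp : Fin N → Fin N → ℂ) :
    ((Dz = (-∑ j, (z - lam j)⁻¹ •
        (Matrix.single j j (1 : ℂ) *
          ((Γ * Matrix.diagonal lam - Matrix.diagonal lam * Γ) +
            q • (1 : Matrix (Fin N) (Fin N) ℂ)))).mulVec φ) ∧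
      (∀ j, (fun i => Dp i j) =
        (((z - lam j)⁻¹ •
            (Matrix.single j j (1 : ℂ) *
              ((Γ * Matrix.diagonal lam - Matrix.diagonal lam * Γ) +
                q • (1 : Matrix (Fin N) (Fin N) ℂ)))) +
          (Γ * Matrix.single j j (1 : ℂ) -
            Matrix.single j j (1 : ℂ) * Γ)).mulVec φ))
    ↔ ((∀ j, z * Dz j + ∑ k, lam k * Dp j k = -q * φ j) ∧
       (∀ j, Dz j + ∑ k, Dp j k = 0) ∧
       (∀ j k, j ≠ k → Dp j k = Γ j k * φ k)) :=
  fuchsian_system_iff_euler_unit_rauch_general N lam z hz Γ hΓ q φ Dz Dp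
end

section
/- With the notation of the Fuchsian system dΦ/dλ = −Σ_{j=1}^N (λ−λ_j)^{-1} E_j(V+qI) Φ, if Φ^q is a solution of the system with parameter q, then its λ-derivative ∂Φ^q/∂λ is a solution of the same system with parameter q+1. Equivalently, ∂Φ^q/∂λ = A^q(λ) Φ^q(λ) where A^q(λ) = −Σ_{j=1}^N (λ−λ_j)^{-1} E_j(V+qI), and A^{q+1}(λ) (A^q(λ)Φ^q) = ∂/∂λ (A^q(λ)Φ^q), provided Φ^q also satisfies the deformation equations ∂Φ^q/∂λ_j = ((λ−λ_j)^{-1}E_j(V+qI) + [Γ,E_j])Φ^q and Γ satisfies ∂Γ_{ij}/∂λ_k = Γ_{ik}Γ_{jk} for distinct i,j,k, Σ_k ∂Γ_{ij}/∂λ_k = 0, and Σ_k λ_k ∂Γ_{ij}/∂λ_k = −Γ_{ij}. -/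
/-!
Write `A^q(λ) = -(λ - U)⁻¹ (V + q)`, so that row `i` of the Fuchsian system reads
`Φ'ᵢ = -(λ - λᵢ)⁻¹ ((V + q) Φ)ᵢ`. Differentiating once more, the derivative of
`(λ - λᵢ)⁻¹` is `-(λ - λᵢ)⁻¹ · (λ - λᵢ)⁻¹`, and the second factor times `-((V + q) Φ)ᵢ` is
`Φ'ᵢ` again: `Φ''ᵢ = -(λ - λᵢ)⁻¹ ((V + q) Φ' + Φ')ᵢ`, which is the system with `q + 1`.
-/

open Matrix

theorem Matrix.sum_smul_single_mul_eq_diagonal_mul {n R : Type*} [Fintype n] [DecidableEq n]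
    [Semiring R] (c : n → R) (M : Matrix n n R) :
    ∑ l, c l • (single l l (1 : R) * M) = diagonal c * M := by
  simp only [← smul_mul_assoc, smul_single, smul_eq_mul, mul_one, ← Finset.sum_mul]
  congr 1
  ext i j
  simp [Matrix.sum_apply, single_apply, diagonal_apply, ite_and, eq_comm]

theorem Matrix.neg_sum_smul_single_mul_mul_apply {n R : Type*} [Fintype n] [DecidableEq n]
    [Ring R] (c : n → R) (M B : Matrix n n R) (i j : n) :
    ((-∑ l, c l • (single l l (1 : R) * M)) * B) i j = -(c i * (M * B) i j) := by
  rw [sum_smul_single_mul_eq_diagonal_mul, neg_mul, neg_apply, Matrix.mul_assoc, diagonal_mul]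

theorem HasDerivAt.matrix_mul_apply {m n p 𝕜 : Type*} [Fintype n] [NontriviallyNormedField 𝕜]
    (M : Matrix m n 𝕜) {Φ : 𝕜 → Matrix n p 𝕜} {Φ' : Matrix n p 𝕜} {z : 𝕜} (i : m) (j : p)
    (hΦ : ∀ k, HasDerivAt (fun t => Φ t k j) (Φ' k j) z) :
    HasDerivAt (fun t => (M * Φ t) i j) ((M * Φ') i j) z := by
  simp only [mul_apply]
  exact HasDerivAt.fun_sum fun k _ => (hΦ k).const_mul (M i k)

theorem HasDerivAt.of_eventuallyEq_neg_inv_sub_smul {𝕜 F : Type*} [NontriviallyNormedField 𝕜]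
    [NormedAddCommGroup F] [NormedSpace 𝕜 F] {f g : 𝕜 → F} {g' : F} {a z : 𝕜}
    (hz : z ≠ a) (hg : HasDerivAt g g' z) (hf : f =ᶠ[nhds z] fun t => -((t - a)⁻¹ • g t)) :
    HasDerivAt f (-((z - a)⁻¹ • (g' + f z))) z := by
  have hinv : HasDerivAt (fun t => (t - a)⁻¹) (-((z - a)⁻¹ * (z - a)⁻¹)) z := by
    simpa [pow_two, neg_div, mul_inv] using
      ((hasDerivAt_id z).sub_const a).fun_inv (sub_ne_zero.mpr hz)
  refine ((hinv.smul hg).neg.congr_of_eventuallyEq hf).congr_deriv ?_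
  rw [hf.eq_of_nhds]
  module

theorem deriv_solution_shifts_q_general
    (N : ℕ) (q : ℂ)
    (Γ : (Fin N → ℂ) → Matrix (Fin N) (Fin N) ℂ)
    (Φ DΦz : ℂ → (Fin N → ℂ) → Matrix (Fin N) (Fin N) ℂ)
    (hΦz : ∀ (z : ℂ) (p : Fin N → ℂ), (∀ j, z ≠ p j) → Function.Injective p →
      ∀ i j, HasDerivAt (fun t => Φ t p i j) (DΦz z p i j) z)
    (hsys : ∀ (z : ℂ) (p : Fin N → ℂ), (∀ j, z ≠ p j) → Function.Injective p →
      DΦz z p = (-∑ j, (z - p j)⁻¹ •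
        (Matrix.single j j (1 : ℂ) *
          ((Γ p * Matrix.diagonal p - Matrix.diagonal p * Γ p) +
            q • (1 : Matrix (Fin N) (Fin N) ℂ)))) * Φ z p) :
    ∀ (z : ℂ) (p : Fin N → ℂ), (∀ j, z ≠ p j) → Function.Injective p →
      ∀ i j, HasDerivAt (fun t => DΦz t p i j)
        (((-∑ l, (z - p l)⁻¹ •
          (Matrix.single l l (1 : ℂ) *
            ((Γ p * Matrix.diagonal p - Matrix.diagonal p * Γ p) +
              (q + 1) • (1 : Matrix (Fin N) (Fin N) ℂ)))) * DΦz z p) i j) z := by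
  intro z p hz hp i j
  set M := (Γ p * diagonal p - diagonal p * Γ p) + q • (1 : Matrix (Fin N) (Fin N) ℂ)
  have hrow : ∀ t, (∀ l, t ≠ p l) → DΦz t p i j = -((t - p i)⁻¹ • (M * Φ t p) i j) := by
    intro t ht
    rw [hsys t p ht hp, neg_sum_smul_single_mul_mul_apply, smul_eq_mul]
  have hrow_near : (fun t => DΦz t p i j) =ᶠ[nhds z] fun t => -((t - p i)⁻¹ • (M * Φ t p) i j) :=
    (Filter.eventually_all.mpr fun l => eventually_ne_nhds (hz l)).mono hrow
  have hderiv := HasDerivAt.of_eventuallyEq_neg_inv_sub_smul (hz i)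
    (HasDerivAt.matrix_mul_apply M i j fun k => hΦz z p hz hp k j) hrow_near
  refine hderiv.congr_deriv ?_
  rw [add_smul, one_smul, ← add_assoc, neg_sum_smul_single_mul_mul_apply, Matrix.add_mul M,
    Matrix.one_mul, Matrix.add_apply, smul_eq_mul]

/-- If `Φ` solves the Fuchsian system with parameter `q` together with the
isomonodromic deformation equations, and the rotation coefficients `Γ` satisfy the
Darboux–Egoroff equations together with the unit and Euler vector field conditions,
then the `λ`-derivative of `Φ` solves the Fuchsian system with parameter `q + 1`. -/
theorem deriv_solution_shifts_q
    (N : ℕ) (q : ℂ)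
    (Γ : (Fin N → ℂ) → Matrix (Fin N) (Fin N) ℂ)
    (DΓ : (Fin N → ℂ) → Fin N → Matrix (Fin N) (Fin N) ℂ)
    (Φ DΦz : ℂ → (Fin N → ℂ) → Matrix (Fin N) (Fin N) ℂ)
    (DΦp : ℂ → (Fin N → ℂ) → Fin N → Matrix (Fin N) (Fin N) ℂ)
    (hΓdiag : ∀ (p : Fin N → ℂ) i, Γ p i i = 0)
    (hDΓ : ∀ (p : Fin N → ℂ), Function.Injective p → ∀ k i j,
      HasDerivAt (fun t => Γ (Function.update p k t) i j) (DΓ p k i j) (p k))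
    (hΓ1 : ∀ (p : Fin N → ℂ), Function.Injective p → ∀ i j k,
      i ≠ j → j ≠ k → i ≠ k → DΓ p k i j = Γ p i k * Γ p j k)
    (hΓ2 : ∀ (p : Fin N → ℂ), Function.Injective p → ∀ i j, i ≠ j →
      ∑ k, DΓ p k i j = 0)
    (hΓ3 : ∀ (p : Fin N → ℂ), Function.Injective p → ∀ i j, i ≠ j →
      ∑ k, p k * DΓ p k i j = -Γ p i j)
    (hΦz : ∀ (z : ℂ) (p : Fin N → ℂ), (∀ j, z ≠ p j) → Function.Injective p →
      ∀ i j, HasDerivAt (fun t => Φ t p i j) (DΦz z p i j) z)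
    (hΦp : ∀ (z : ℂ) (p : Fin N → ℂ), (∀ j, z ≠ p j) → Function.Injective p →
      ∀ k i j, HasDerivAt (fun t => Φ z (Function.update p k t) i j)
        (DΦp z p k i j) (p k))
    (hsys : ∀ (z : ℂ) (p : Fin N → ℂ), (∀ j, z ≠ p j) → Function.Injective p →
      DΦz z p = (-∑ j, (z - p j)⁻¹ •
        (Matrix.single j j (1 : ℂ) *
          ((Γ p * Matrix.diagonal p - Matrix.diagonal p * Γ p) +
            q • (1 : Matrix (Fin N) (Fin N) ℂ)))) * Φ z p)
    (hdef : ∀ (z : ℂ) (p : Fin N → ℂ), (∀ j, z ≠ p j) → Function.Injective p →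
      ∀ j, DΦp z p j =
        (((z - p j)⁻¹ •
          (Matrix.single j j (1 : ℂ) *
            ((Γ p * Matrix.diagonal p - Matrix.diagonal p * Γ p) +
              q • (1 : Matrix (Fin N) (Fin N) ℂ)))) +
          (Γ p * Matrix.single j j (1 : ℂ) -
            Matrix.single j j (1 : ℂ) * Γ p)) * Φ z p) :
    ∀ (z : ℂ) (p : Fin N → ℂ), (∀ j, z ≠ p j) → Function.Injective p →
      ∀ i j, HasDerivAt (fun t => DΦz t p i j)
        (((-∑ l, (z - p l)⁻¹ •
          (Matrix.single l l (1 : ℂ) *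
            ((Γ p * Matrix.diagonal p - Matrix.diagonal p * Γ p) +
              (q + 1) • (1 : Matrix (Fin N) (Fin N) ℂ)))) * DΦz z p) i j) z :=
  deriv_solution_shifts_q_general N q Γ Φ DΦz hΦz hsys
end

section
/- Let B₃ = ⟨σ₁,σ₂⟩ be the braid group on three strands, h̃ : B₃ → SL(2,ℤ) the homomorphism with h̃(σ₁) = [[1,−1],[0,1]], h̃(σ₂) = [[1,0],[1,1]], and let U ≤ SL(2,ℤ) be the subgroup of upper-triangular matrices (i.e., matrices [[a,b],[0,d]] with ad = 1). Set θ := σ₂²σ₁σ₂². Then h̃(θ) = [[−1,−1],[0,−1]], the relation (σ₂σ₁σ₂)⁴ = (σ₁θ)² holds in B₃, and the preimage h̃^{-1}(U) equals the subgroup of B₃ generated by σ₁ and θ. -/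
/-- The braid relation for the braid group `B₃`. -/
def braidRels : Set (FreeGroup (Fin 2)) :=
  {FreeGroup.of 0 * FreeGroup.of 1 * FreeGroup.of 0 *
    (FreeGroup.of 1 * FreeGroup.of 0 * FreeGroup.of 1)⁻¹}

/-- The braid group `B₃ = ⟨σ₁, σ₂ | σ₁σ₂σ₁ = σ₂σ₁σ₂⟩`. -/
abbrev BraidGroup3 := PresentedGroup braidRels

/-- The generator `σ₁` of `B₃`. -/
def sigma1 : BraidGroup3 := PresentedGroup.of 0

/-- The generator `σ₂` of `B₃`. -/
def sigma2 : BraidGroup3 := PresentedGroup.of 1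

/-- The braid `θ = σ₂²σ₁σ₂²`. -/
def theta : BraidGroup3 := sigma2 ^ 2 * sigma1 * sigma2 ^ 2

/-- The images of `σ₁`, `σ₂` in `SL(2,ℤ)`. -/
def braidImg : Fin 2 → Matrix.SpecialLinearGroup (Fin 2) ℤ :=
  ![⟨!![1, -1; 0, 1], by simp [Matrix.det_fin_two_of]⟩,
    ⟨!![1, 0; 1, 1], by simp [Matrix.det_fin_two_of]⟩]

lemma braidImg_rels : ∀ r ∈ braidRels, FreeGroup.lift braidImg r = 1 := by
  intro r hr
  rcases hr with rfl
  simp only [map_mul, map_inv, FreeGroup.lift_apply_of]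
  rw [mul_inv_eq_one]
  ext i j
  fin_cases i <;> fin_cases j <;> decide

/-- The homomorphism `h̃ : B₃ → SL(2,ℤ)`. -/
def htilde : BraidGroup3 →* Matrix.SpecialLinearGroup (Fin 2) ℤ :=
  PresentedGroup.toGroup braidImg_rels

/-- The subgroup of upper-triangular matrices in `SL(2,ℤ)`, i.e. those with
vanishing lower-left entry. -/
def upperTriangular : Subgroup (Matrix.SpecialLinearGroup (Fin 2) ℤ) where
  carrier := {x | (x : Matrix (Fin 2) (Fin 2) ℤ) 1 0 = 0}
  one_mem' := by
    simp
  mul_mem' := by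
    intro a b ha hb
    simp only [Set.mem_setOf_eq] at ha hb ⊢
    rw [Matrix.SpecialLinearGroup.coe_mul, Matrix.mul_apply, Fin.sum_univ_two]
    simp [ha, hb]
  inv_mem' := by
    intro a ha
    simp only [Set.mem_setOf_eq] at ha ⊢
    rw [Matrix.SpecialLinearGroup.coe_inv, Matrix.adjugate_fin_two]
    simp [ha]


/-!
Under `h̃`, `σ₁ ↦ T⁻¹`, `Δ = σ₁σ₂σ₁ ↦ S` and `σ₁σ₂ ↦ ST`, while `σ₁θ = Δ² = (σ₁σ₂)³` is
central in `B₃`. Through the Möbius action on `ℍ`, `S` and `ST` have orders 2 and 3, and the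
ping-pong lemma on the half-planes `Re z > 0`, `Re z < 0` shows that the induced action of
`ℤ/2 ∗ ℤ/3` is faithful. Since `B₃ → ℤ/2 ∗ ℤ/3 → B₃ ⧸ ⟨Δ²⟩` is the quotient map, a braid acting
trivially on `ℍ` is a power of `Δ²`. An upper-triangular matrix acts on `ℍ` as a translation
`T ^ n`, i.e. as `h̃(σ₁ ^ (-n))`, so its preimages lie in `σ₁ ^ (-n) ⟨Δ²⟩ ⊆ ⟨σ₁, θ⟩`.
-/

open ModularGroup UpperHalfPlane
open scoped MatrixGroups Pointwise

def zmodLift {G : Type*} [Group G] {n : ℕ} (g : G) (hg : g ^ n = 1) :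
    Multiplicative (ZMod n) →* G :=
  AddMonoidHom.toMultiplicativeLeft <|
    ZMod.lift n ⟨zmultiplesHom (Additive G) (Additive.ofMul g), by simp [← ofMul_pow, hg]⟩

lemma zmodLift_ofAdd_natCast {G : Type*} [Group G] {n : ℕ} (g : G) (hg : g ^ n = 1) (k : ℕ) :
    zmodLift g hg (Multiplicative.ofAdd (k : ZMod n)) = g ^ k := by
  rw [← Int.cast_natCast, zmodLift, AddMonoidHom.toMultiplicativeLeft_apply_apply, toAdd_ofAdd,
    ZMod.lift_coe]
  simp

lemma braid_relation_of_sq_eq_one_of_pow_three_eq_one {G : Type*} [Group G] {a b : G}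
    (ha : a ^ 2 = 1) (hb : b ^ 3 = 1) :
    b⁻¹ * a * (a * b⁻¹) * (b⁻¹ * a) = a * b⁻¹ * (b⁻¹ * a) * (a * b⁻¹) := by
  rw [sq] at ha
  rw [pow_three] at hb
  have hl : b⁻¹ * a * (a * b⁻¹) * (b⁻¹ * a) = b⁻¹ * (a * a) * (b * (b * b))⁻¹ * b * a := by group
  have hr : a * b⁻¹ * (b⁻¹ * a) * (a * b⁻¹) = a * (b * (b * b))⁻¹ * b * (a * a) * b⁻¹ := by group
  rw [hl, hr, ha, hb]
  group

namespace BraidGroup3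

theorem braid_relation : sigma1 * sigma2 * sigma1 = sigma2 * sigma1 * sigma2 :=
  mul_inv_eq_one.mp (PresentedGroup.one_of_mem rfl)

section Lift

variable {G : Type*} [Group G]

def lift (s t : G) (h : s * t * s = t * s * t) : BraidGroup3 →* G :=
  PresentedGroup.toGroup (f := ![s, t]) (by rintro r rfl; simp [h])

variable {s t : G} {h : s * t * s = t * s * t}

@[simp] lemma lift_sigma1 : lift s t h sigma1 = s := PresentedGroup.toGroup.of _

@[simp] lemma lift_sigma2 : lift s t h sigma2 = t := PresentedGroup.toGroup.of _

lemma hom_ext {φ ψ : BraidGroup3 →* G} (h1 : φ sigma1 = ψ sigma1) (h2 : φ sigma2 = ψ sigma2) :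
    φ = ψ :=
  PresentedGroup.ext fun i => by fin_cases i; exacts [h1, h2]

end Lift

def delta : BraidGroup3 := sigma1 * sigma2 * sigma1

def fullTwist : BraidGroup3 := delta ^ 2

lemma delta_mul_sigma1 : delta * sigma1 = sigma2 * delta := by
  rw [delta, ← mul_assoc, ← mul_assoc, braid_relation]

lemma delta_mul_sigma2 : delta * sigma2 = sigma1 * delta := by
  rw [delta, mul_assoc, braid_relation]
  group

lemma fullTwist_eq_pow_three : fullTwist = (sigma1 * sigma2) ^ 3 := by
  rw [fullTwist, delta, sq]
  nth_rw 2 [braid_relation]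
  simp only [pow_succ, pow_zero, one_mul, mul_assoc]

lemma sigma1_mul_theta : sigma1 * theta = fullTwist := by
  have : theta = sigma2 * (sigma2 * sigma1 * sigma2) * sigma2 := by
    rw [theta]
    simp only [sq, mul_assoc]
  rw [this, ← braid_relation, fullTwist_eq_pow_three]
  simp only [pow_succ, pow_zero, one_mul, mul_assoc]

lemma commute_fullTwist (g : BraidGroup3) : Commute fullTwist g := by
  suffices (MulAut.conj fullTwist).toMonoidHom = MonoidHom.id _ by
    simpa [commute_iff_eq, mul_inv_eq_iff_eq_mul] using DFunLike.congr_fun this g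
  refine hom_ext ?_ ?_ <;> simp [fullTwist, sq, mul_assoc, delta_mul_sigma1, delta_mul_sigma2]

instance : (Subgroup.zpowers fullTwist).Normal where
  conj_mem n hn g := by
    obtain ⟨k, rfl⟩ := Subgroup.mem_zpowers_iff.mp hn
    rwa [← ((commute_fullTwist g).zpow_left k).eq, mul_inv_cancel_right]

lemma htilde_sigma1 : htilde sigma1 = T⁻¹ := by
  rw [sigma1, htilde, PresentedGroup.toGroup.of]
  decide

lemma htilde_sigma2 : htilde sigma2 = S * T⁻¹ * S⁻¹ := by
  rw [sigma2, htilde, PresentedGroup.toGroup.of]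
  decide

lemma htilde_theta : htilde theta = -T := by
  rw [theta, map_mul, map_mul, map_pow, htilde_sigma1, htilde_sigma2]
  decide

end BraidGroup3

noncomputable section

abbrev moebius : SL(2, ℤ) →* Equiv.Perm ℍ := MulAction.toPermHom _ _

lemma moebius_neg (g : SL(2, ℤ)) : moebius (-g) = moebius g :=
  Equiv.ext (SL_neg_smul g)

lemma re_S_smul (z : ℍ) : (S • z).re = -z.re / Complex.normSq z := by
  rw [modular_S_smul]
  simp [Complex.inv_re, neg_div]

lemma re_S_smul_pos_of_re_neg {z : ℍ} (hz : z.re < 0) : 0 < (S • z).re := by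
  rw [re_S_smul]
  exact div_pos (neg_pos.mpr hz) (normSq_pos z)

lemma re_S_smul_neg_of_re_pos {z : ℍ} (hz : 0 < z.re) : (S • z).re < 0 := by
  rw [re_S_smul]
  exact div_neg_of_neg_of_pos (neg_neg_of_pos hz) (normSq_pos z)

abbrev cyclicFactor (i : Fin 2) : Type := Multiplicative (ZMod (i + 2))

def modularGen : Fin 2 → SL(2, ℤ) := ![S, S * T]

lemma modularGen_pow (i : Fin 2) : modularGen i ^ (i + 2 : ℕ) = -1 := by
  fin_cases i
  · show S ^ 2 = -1
    decide
  · show (S * T) ^ 3 = -1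
    decide

def modularHom (i : Fin 2) : cyclicFactor i →* Equiv.Perm ℍ :=
  zmodLift (moebius (modularGen i)) (by rw [← map_pow, modularGen_pow, moebius_neg, map_one])

lemma modularHom_ofAdd (i : Fin 2) (k : ℕ) :
    modularHom i (.ofAdd k) = moebius (modularGen i ^ k) := by
  rw [modularHom, zmodLift_ofAdd_natCast, map_pow]

def halfPlanes : Fin 2 → Set ℍ := ![{z | 0 < z.re}, {z | z.re < 0}]

lemma modularHom_smul_halfPlanes : Pairwise fun i j =>
    ∀ h : cyclicFactor i, h ≠ 1 → modularHom i h • halfPlanes j ⊆ halfPlanes i := by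
  intro i j hij
  fin_cases i <;> fin_cases j
  · exact absurd rfl hij
  · intro h hh
    obtain rfl : h = .ofAdd (1 : ℕ) := by revert h; decide
    rw [modularHom_ofAdd, pow_one, Set.smul_set_subset_iff]
    exact fun z hz => re_S_smul_pos_of_re_neg hz
  · intro h hh
    obtain rfl | rfl : h = .ofAdd (1 : ℕ) ∨ h = .ofAdd (2 : ℕ) := by revert h; decide
    all_goals
      rw [modularHom_ofAdd, Set.smul_set_subset_iff]
      intro z (hz : 0 < z.re)
    · show ((S * T) ^ 1 • z).re < 0
      rw [pow_one, mul_smul]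
      exact re_S_smul_neg_of_re_pos (by rw [re_T_smul]; linarith)
    · show ((S * T) ^ 2 • z).re < 0
      rw [show (S * T) ^ 2 = T⁻¹ * S by decide, mul_smul, re_T_inv_smul]
      linarith [re_S_smul_neg_of_re_pos hz]
  · exact absurd rfl hij

theorem lift_modularHom_injective : Function.Injective (Monoid.CoprodI.lift modularHom) := by
  refine Monoid.CoprodI.lift_injective_of_ping_pong modularHom
    (Or.inr ⟨1, by simp [Cardinal.mk_fintype]⟩) halfPlanes ?_ ?_ modularHom_smul_halfPlanes
  · intro i
    fin_cases i
    · exact ⟨T • I, show 0 < (T • I).re by rw [re_T_smul, I_re]; norm_num⟩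
    · exact ⟨T⁻¹ • I, show (T⁻¹ • I).re < 0 by rw [re_T_inv_smul, I_re]; norm_num⟩
  · intro i j hij
    fin_cases i <;> fin_cases j
    · exact absurd rfl hij
    · exact Set.disjoint_left.mpr fun z (h0 : 0 < z.re) (h1 : z.re < 0) => lt_asymm h0 h1
    · exact Set.disjoint_left.mpr fun z (h1 : z.re < 0) (h0 : 0 < z.re) => lt_asymm h0 h1
    · exact absurd rfl hij

def coprodGen (i : Fin 2) : Monoid.CoprodI cyclicFactor :=
  Monoid.CoprodI.of (Multiplicative.ofAdd (1 : ZMod (i + 2)))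

lemma coprodGen_pow (i : Fin 2) : coprodGen i ^ (i + 2 : ℕ) = 1 := by
  rw [coprodGen, ← map_pow, ← ofAdd_nsmul, nsmul_one, ZMod.natCast_self, ofAdd_zero, map_one]

lemma lift_modularHom_coprodGen (i : Fin 2) :
    Monoid.CoprodI.lift modularHom (coprodGen i) = moebius (modularGen i) := by
  rw [coprodGen, Monoid.CoprodI.lift_of, ← Nat.cast_one, modularHom_ofAdd, pow_one]

namespace BraidGroup3

def toCoprod : BraidGroup3 →* Monoid.CoprodI cyclicFactor :=
  lift ((coprodGen 1)⁻¹ * coprodGen 0) (coprodGen 0 * (coprodGen 1)⁻¹)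
    (braid_relation_of_sq_eq_one_of_pow_three_eq_one (coprodGen_pow 0) (coprodGen_pow 1))

lemma lift_modularHom_comp_toCoprod :
    (Monoid.CoprodI.lift modularHom).comp toCoprod = moebius.comp htilde := by
  refine hom_ext ?_ ?_ <;>
    simp only [toCoprod, MonoidHom.comp_apply, lift_sigma1, lift_sigma2, map_mul, map_inv,
      lift_modularHom_coprodGen, htilde_sigma1, htilde_sigma2]
  all_goals
    simp only [modularGen, Matrix.cons_val_zero, Matrix.cons_val_one, map_mul]
    group

def braidGen : Fin 2 → BraidGroup3 := ![delta, sigma1 * sigma2]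

lemma braidGen_pow (i : Fin 2) : braidGen i ^ (i + 2 : ℕ) = fullTwist := by
  fin_cases i
  · rfl
  · exact fullTwist_eq_pow_three.symm

def fromCoprod : Monoid.CoprodI cyclicFactor →* BraidGroup3 ⧸ Subgroup.zpowers fullTwist :=
  Monoid.CoprodI.lift fun i =>
    zmodLift (braidGen i : BraidGroup3 ⧸ Subgroup.zpowers fullTwist) <| by
      rw [← QuotientGroup.mk_pow, braidGen_pow, QuotientGroup.eq_one_iff]
      exact Subgroup.mem_zpowers _

lemma fromCoprod_coprodGen (i : Fin 2) : fromCoprod (coprodGen i) = braidGen i := by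
  rw [coprodGen, fromCoprod, Monoid.CoprodI.lift_of, ← Nat.cast_one, zmodLift_ofAdd_natCast,
    pow_one]

lemma fromCoprod_comp_toCoprod : fromCoprod.comp toCoprod = QuotientGroup.mk' _ := by
  refine hom_ext ?_ ?_ <;>
    simp only [toCoprod, MonoidHom.comp_apply, lift_sigma1, lift_sigma2, map_mul, map_inv,
      fromCoprod_coprodGen, QuotientGroup.mk'_apply, ← QuotientGroup.mk_inv, ← QuotientGroup.mk_mul]
  · congr 1
    show (sigma1 * sigma2)⁻¹ * delta = sigma1
    rw [delta]
    group
  · congr 1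
    show delta * (sigma1 * sigma2)⁻¹ = sigma2
    rw [delta, braid_relation]
    group

theorem mem_zpowers_fullTwist_of_htilde_smul {g : BraidGroup3}
    (hg : ∀ z : ℍ, htilde g • z = z) : g ∈ Subgroup.zpowers fullTwist := by
  have h : toCoprod g = 1 := lift_modularHom_injective <| by
    rw [map_one, ← MonoidHom.comp_apply, lift_modularHom_comp_toCoprod, MonoidHom.comp_apply]
    exact Equiv.ext hg
  rw [← QuotientGroup.eq_one_iff, ← QuotientGroup.mk'_apply, ← fromCoprod_comp_toCoprod,
    MonoidHom.comp_apply, h, map_one]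

end BraidGroup3

end

/-- `h̃(θ) = [[-1,-1],[0,-1]]`; the relation `(σ₂σ₁σ₂)⁴ = (σ₁θ)²` holds in `B₃`;
and the preimage under `h̃` of the upper-triangular subgroup of `SL(2,ℤ)` is the
subgroup of `B₃` generated by `σ₁` and `θ`. -/
theorem preimage_upper_triangular :
    ((htilde theta : Matrix.SpecialLinearGroup (Fin 2) ℤ) :
        Matrix (Fin 2) (Fin 2) ℤ) = !![-1, -1; 0, -1]
    ∧ (sigma2 * sigma1 * sigma2) ^ 4 = (sigma1 * theta) ^ 2
    ∧ Subgroup.comap htilde upperTriangular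
        = Subgroup.closure ({sigma1, theta} : Set BraidGroup3) := by
  have hsigma1 : sigma1 ∈ Subgroup.closure {sigma1, theta} := Subgroup.subset_closure (.inl rfl)
  have htheta : theta ∈ Subgroup.closure {sigma1, theta} := Subgroup.subset_closure (.inr rfl)
  refine ⟨by rw [BraidGroup3.htilde_theta]; decide, ?_, le_antisymm (fun g hg => ?_) ?_⟩
  · rw [← BraidGroup3.braid_relation, BraidGroup3.sigma1_mul_theta, BraidGroup3.fullTwist,
      ← pow_mul]
    rfl
  · obtain ⟨n, hn⟩ := exists_eq_T_zpow_of_c_eq_zero hg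
    have hker : g * sigma1 ^ n ∈ Subgroup.zpowers BraidGroup3.fullTwist :=
      BraidGroup3.mem_zpowers_fullTwist_of_htilde_smul fun z => by
        rw [map_mul, mul_smul, map_zpow, BraidGroup3.htilde_sigma1, hn, ← mul_smul, inv_zpow,
          mul_inv_cancel, one_smul]
    have hle : Subgroup.zpowers BraidGroup3.fullTwist ≤ Subgroup.closure {sigma1, theta} :=
      Subgroup.zpowers_le.mpr (BraidGroup3.sigma1_mul_theta ▸ mul_mem hsigma1 htheta)
    simpa using mul_mem (hle hker) (zpow_mem hsigma1 (-n))
  · rw [Subgroup.closure_le]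
    rintro _ (rfl | rfl)
    · show (htilde sigma1 : Matrix (Fin 2) (Fin 2) ℤ) 1 0 = 0
      rw [BraidGroup3.htilde_sigma1]
      decide
    · show (htilde theta : Matrix (Fin 2) (Fin 2) ℤ) 1 0 = 0
      rw [BraidGroup3.htilde_theta]
      decide
end
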